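/- arXiv:2301.12741 — 2 statements merged into one kernel-verified Lean document; each statement's English description precedes it below -/
import Mathlib

section
/- For all integers m and n, the family (A(m,k)·B̃(n,k))_{k∈ℤ} has only finitely many nonzero members, and 2·Σ_{k∈ℤ} A(m,k)·B̃(n,k) = δ_{m,n} in ℚ[β]. (Equivalently, the β-deformed fermions satisfy the duality relation [(Φ^{[β]}_n)^*, φ^{(β)}_m]_+ = δ_{m,n}.) -/
/-!
Statement 2: duality `[(Φ^{[β]}_n)^*, φ^{(β)}_m]_+ = δ_{m,n}` expressed through
the coefficient families: `(A(m,k)·B̃(n,k))_k` has finite support and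
`2·Σ_k A(m,k)·B̃(n,k) = δ_{m,n}` in `ℚ(β)`.
-/

noncomputable section

open scoped BigOperators

/-- The base field `K = ℚ(β)`. -/
abbrev K : Type := RatFunc ℚ

/-- The indeterminate `β`. -/
def β : K := RatFunc.X

/-- The geometric-series expansion of `1/(1+cz)` as a formal power series. -/
def geomPS (c : K) : PowerSeries K := PowerSeries.mk fun n => (-c) ^ n

lemma sum_choose_shift (j n : ℕ) :
    ∑ a ∈ Finset.range (n+1), (j + a - 1).choose a = (j + n).choose n := by
  induction n with
  | zero => simp
  | succ n ih =>
    rw [Finset.sum_range_succ, ih]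
    have h1 : j + (n+1) - 1 = j + n := by omega
    rw [h1]
    have h2 : j + (n+1) = (j+n) + 1 := by omega
    rw [h2, Nat.choose_succ_succ]

lemma geomPS_pow (x : K) (j : ℕ) :
    (geomPS x)^j = PowerSeries.mk fun i => (-x)^i * ((j + i - 1).choose i : K) := by
  induction j with
  | zero =>
    ext i
    rcases i with _ | s <;>
      simp [PowerSeries.coeff_one, Nat.choose_eq_zero_of_lt (Nat.lt_succ_self _)]
  | succ j ih =>
    ext t
    rw [pow_succ, ih, PowerSeries.coeff_mul, Finset.Nat.sum_antidiagonal_eq_sum_range_succ_mk]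
    simp only [PowerSeries.coeff_mk, geomPS]
    have hterm : ∀ i ∈ Finset.range (t+1),
        (-x)^i * ((j + i - 1).choose i : K) * (-x)^(t-i)
          = (-x)^t * ((j + i - 1).choose i : K) := by
      intro i hi
      rw [Finset.mem_range] at hi
      rw [mul_right_comm, ← pow_add]
      congr 2
      omega
    rw [Finset.sum_congr rfl hterm, ← Finset.mul_sum]
    have : ∑ i ∈ Finset.range (t+1), ((j + i - 1).choose i : K)
        = ((j + t).choose t : K) := by
      rw [← Nat.cast_sum, sum_choose_shift]
    rw [this, show j + 1 + t - 1 = j + t by omega]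

lemma coeff_X_geom_pow (x : K) (j p : ℕ) :
    PowerSeries.coeff (R := K) p ((PowerSeries.X * geomPS x)^j)
      = if j ≤ p then (-x)^(p-j) * ((p-1).choose (p-j) : K) else 0 := by
  rw [mul_pow, PowerSeries.coeff_X_pow_mul']
  split_ifs with h
  · rw [geomPS_pow, PowerSeries.coeff_mk]
    congr 3
    omega
  · rfl

lemma onePlus_pow (x : K) (j : ℕ) :
    ((1 + PowerSeries.C (R := K) x * PowerSeries.X)^j : PowerSeries K)
      = PowerSeries.mk fun t => (j.choose t : K) * x^t := by
  induction j with
  | zero =>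
    ext t
    rcases t with _ | s <;> simp [PowerSeries.coeff_one]
  | succ j ih =>
    ext t
    rw [pow_succ, ih]
    have h1 : (PowerSeries.mk fun t => ((j.choose t : K) * x^t))
        * (1 + PowerSeries.C (R := K) x * PowerSeries.X)
        = (PowerSeries.mk fun t => ((j.choose t : K) * x^t))
          + PowerSeries.C (R := K) x * (PowerSeries.X * PowerSeries.mk fun t => ((j.choose t : K) * x^t)) := by
      ring
    rw [h1, map_add, PowerSeries.coeff_C_mul]
    rcases t with _ | s
    · simp [PowerSeries.coeff_zero_X_mul]
    · rw [PowerSeries.coeff_succ_X_mul]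
      simp only [PowerSeries.coeff_mk]
      rw [Nat.choose_succ_succ]
      push_cast
      ring

lemma geom_mul_onePlus (x : K) :
    geomPS x * (1 + PowerSeries.C (R := K) x * PowerSeries.X) = 1 := by
  have h1 : geomPS x * (1 + PowerSeries.C (R := K) x * PowerSeries.X)
      = geomPS x + PowerSeries.C (R := K) x * (PowerSeries.X * geomPS x) := by ring
  rw [h1]
  ext t
  rw [map_add, PowerSeries.coeff_C_mul]
  rcases t with _ | s
  · simp [geomPS, PowerSeries.coeff_one]
  · rw [PowerSeries.coeff_succ_X_mul]
    simp only [geomPS, PowerSeries.coeff_mk, PowerSeries.coeff_one, Nat.succ_ne_zero, if_false]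
    ring

lemma geom_cauchy (x : K) (F : PowerSeries K) (M : ℕ) :
    ∑ i ∈ Finset.range (M+1), (-x)^i * PowerSeries.coeff (R := K) (M - i) F
      = PowerSeries.coeff (R := K) M (geomPS x * F) := by
  rw [PowerSeries.coeff_mul, Finset.Nat.sum_antidiagonal_eq_sum_range_succ_mk]
  exact Finset.sum_congr rfl fun i _ => by rw [geomPS, PowerSeries.coeff_mk]

lemma alt_sum_K (L : ℕ) :
    ∑ j ∈ Finset.range (L+1), ((-1:K))^j * (L.choose j : K) = if L = 0 then 1 else 0 := by
  have h := Int.alternating_sum_range_choose (n := L)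
  calc ∑ j ∈ Finset.range (L+1), ((-1:K))^j * (L.choose j : K)
      = ((∑ j ∈ Finset.range (L+1), ((-1:ℤ))^j * (L.choose j : ℤ) : ℤ) : K) := by
        push_cast; rfl
    _ = ((if L = 0 then 1 else 0 : ℤ) : K) := by rw [h]
    _ = _ := by split_ifs <;> simp

lemma neg_one_pow_sub {L j : ℕ} (h : j ≤ L) : ((-1:K))^L * (-1)^j = (-1)^(L-j) := by
  conv_lhs => rw [show L = (L - j) + j by omega]
  rw [pow_add, mul_assoc, ← pow_add, ← two_mul, pow_mul]
  norm_num

lemma alt_sum_K' (L : ℕ) :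
    ∑ j ∈ Finset.range (L+1), ((-1:K))^(L-j) * (L.choose j : K) = if L = 0 then 1 else 0 := by
  have h1 : ∑ j ∈ Finset.range (L+1), ((-1:K))^(L-j) * (L.choose j : K)
      = (-1)^L * ∑ j ∈ Finset.range (L+1), ((-1:K))^j * (L.choose j : K) := by
    rw [Finset.mul_sum]
    refine Finset.sum_congr rfl fun j hj => ?_
    rw [Finset.mem_range] at hj
    rw [← mul_assoc, neg_one_pow_sub (by omega)]
  rw [h1, alt_sum_K]
  split_ifs with h
  · subst h; norm_num
  · ring


/-- `A(m,k) = [z^m](z+β/2)^k` for `k ≥ 0`, and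
`A(m,k) = [z^m]((z⁻¹/(1+(β/2)z⁻¹))^{-k})` (a power series in `z⁻¹`) for `k < 0`. -/
def Acoef (m k : ℤ) : K :=
  if 0 ≤ k then
    (if 0 ≤ m then ((Polynomial.X + Polynomial.C (β / 2)) ^ k.toNat).coeff m.toNat else 0)
  else
    (if m ≤ 0 then
      PowerSeries.coeff (R := K) (-m).toNat ((PowerSeries.X * geomPS (β / 2)) ^ (-k).toNat) else 0)

/-- `B(n,k) = [z^n]((z/(1+(β/2)z))^k)` (a power series in `z`) for `k > 0`, and
`B(n,k) = [z^n]((z⁻¹+β/2)^{-k})` for `k ≤ 0`. -/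
def Bcoef (n k : ℤ) : K :=
  if 0 < k then
    (if 0 ≤ n then
      PowerSeries.coeff (R := K) n.toNat ((PowerSeries.X * geomPS (β / 2)) ^ k.toNat) else 0)
  else
    (if n ≤ 0 then ((Polynomial.X + Polynomial.C (β / 2)) ^ (-k).toNat).coeff (-n).toNat else 0)


/-- `B̃(n,k) := (1/2)·Σ_{i≥0} (−β/2)^i·B(n−i,k)` (finitely many nonzero terms). -/
def Btil (n k : ℤ) : K := (1 / 2 : K) * ∑ᶠ i : ℕ, (-β / 2) ^ i * Bcoef (n - i) k

lemma Acoef_nonneg {m k : ℤ} (hk : 0 ≤ k) :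
    Acoef m k = if 0 ≤ m ∧ m ≤ k then
      (k.toNat.choose m.toNat : K) * (β/2)^((k-m).toNat) else 0 := by
  rw [Acoef, if_pos hk]
  by_cases hm : 0 ≤ m
  · rw [if_pos hm, Polynomial.coeff_X_add_C_pow]
    by_cases hmk : m ≤ k
    · rw [if_pos ⟨hm, hmk⟩, show k.toNat - m.toNat = (k - m).toNat by omega, mul_comm]
    · rw [if_neg (by tauto), Nat.choose_eq_zero_of_lt (by omega)]
      simp
  · rw [if_neg hm, if_neg (by tauto)]

lemma Acoef_neg {m k : ℤ} (hk : k < 0) :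
    Acoef m k = if m ≤ k then
      (-1)^((k-m).toNat) * (((-m-1).toNat.choose ((k-m).toNat)) : K) * (β/2)^((k-m).toNat)
    else 0 := by
  rw [Acoef, if_neg (by omega)]
  by_cases hm : m ≤ 0
  · rw [if_pos hm, coeff_X_geom_pow]
    by_cases hmk : m ≤ k
    · rw [if_pos (by omega : (-k).toNat ≤ (-m).toNat), if_pos hmk,
        show (-m).toNat - (-k).toNat = (k-m).toNat by omega,
        show (-m).toNat - 1 = (-m-1).toNat by omega, neg_pow]
      ring
    · rw [if_neg (by omega), if_neg hmk]
  · rw [if_neg hm, if_neg (by omega)]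

lemma two_ne_zero_K : (2:K) ≠ 0 := by
  intro h
  have hinj := RatFunc.algebraMap_injective (K := ℚ)
  have h2 : algebraMap (Polynomial ℚ) K (2 : Polynomial ℚ)
      = algebraMap (Polynomial ℚ) K (0 : Polynomial ℚ) := by
    rw [map_ofNat, map_zero]; exact h
  have := hinj h2
  norm_num at this

lemma two_Btil (n k : ℤ) :
    2 * Btil n k = ∑ᶠ i : ℕ, (-β / 2) ^ i * Bcoef (n - i) k := by
  rw [Btil, ← mul_assoc, show (2:K) * (1/2) = 1 by rw [one_div, mul_inv_cancel₀]; exact two_ne_zero_K, one_mul]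

lemma Btil_nonneg {n k : ℤ} (hk : 0 ≤ k) :
    2 * Btil n k = if k ≤ n then
      (-1)^((n-k).toNat) * ((n.toNat.choose k.toNat) : K) * (β/2)^((n-k).toNat) else 0 := by
  rw [two_Btil]
  rcases eq_or_lt_of_le hk with hk0 | hk0
  · -- k = 0
    subst hk0
    by_cases hn : (0:ℤ) ≤ n
    · rw [if_pos hn]
      rw [finsum_eq_single _ n.toNat ?_]
      · rw [show n - (n.toNat : ℤ) = 0 by omega, Bcoef,
          if_neg (lt_irrefl (0:ℤ)), if_pos (le_refl (0:ℤ))]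
        simp only [neg_zero, Int.toNat_zero, pow_zero, Polynomial.coeff_one, if_pos rfl, if_true,
          mul_one, sub_zero, Nat.choose_zero_right, Nat.cast_one]
        rw [show (-β/2 : K) = (-1) * (β/2) by ring, mul_pow]
        try ring
      · intro i hi
        rw [Bcoef, if_neg (lt_irrefl (0:ℤ))]
        by_cases h2 : n - (i:ℤ) ≤ 0
        · rw [if_pos h2]
          simp only [neg_zero, Int.toNat_zero, pow_zero, Polynomial.coeff_one]
          rw [if_neg (by omega : ¬ ((-(n - (i:ℤ))).toNat = 0)), mul_zero]
        · rw [if_neg h2, mul_zero]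
    · rw [if_neg (by omega)]
      apply finsum_eq_zero_of_forall_eq_zero
      intro i
      rw [Bcoef, if_neg (lt_irrefl (0:ℤ)), if_pos (by omega : n - (i:ℤ) ≤ 0)]
      simp only [neg_zero, Int.toNat_zero, pow_zero, Polynomial.coeff_one]
      rw [if_neg (by omega : ¬ ((-(n - (i:ℤ))).toNat = 0)), mul_zero]
  · -- 0 < k
    by_cases hkn : k ≤ n
    · rw [if_pos hkn]
      have hn : (0:ℤ) ≤ n := le_trans hk hkn
      have hsub : (Function.support fun i : ℕ => (-β/2 : K)^i * Bcoef (n - i) k)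
          ⊆ ↑(Finset.range (n.toNat+1)) := by
        intro i hi
        simp only [Function.mem_support] at hi
        simp only [Finset.coe_range, Set.mem_Iio]
        by_contra h
        push_neg at h
        exact hi (by rw [Bcoef, if_pos hk0, if_neg (by omega : ¬ (0:ℤ) ≤ n - i), mul_zero])
      rw [finsum_eq_sum_of_support_subset _ hsub]
      have hterm : ∀ i ∈ Finset.range (n.toNat + 1),
          (-β/2 : K)^i * Bcoef (n - i) k
            = (-(β/2 : K))^i * PowerSeries.coeff (R := K) (n.toNat - i)
                ((PowerSeries.X * geomPS (β/2))^k.toNat) := by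
        intro i hi
        rw [Finset.mem_range] at hi
        rw [Bcoef, if_pos hk0, if_pos (by omega : (0:ℤ) ≤ n - i),
          show (n - (i:ℤ)).toNat = n.toNat - i by omega,
          show (-β/2 : K) = -(β/2) by ring]
      rw [Finset.sum_congr rfl hterm, geom_cauchy,
        show geomPS (β/2) * (PowerSeries.X * geomPS (β/2))^k.toNat
            = PowerSeries.X^k.toNat * (geomPS (β/2))^(k.toNat + 1) by rw [mul_pow]; ring,
        PowerSeries.coeff_X_pow_mul', if_pos (by omega : k.toNat ≤ n.toNat),
        geomPS_pow, PowerSeries.coeff_mk,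
        show k.toNat + 1 + (n.toNat - k.toNat) - 1 = n.toNat by omega,
        Nat.choose_symm (by omega : k.toNat ≤ n.toNat),
        show n.toNat - k.toNat = (n - k).toNat by omega, neg_pow]
      ring
    · rw [if_neg hkn]
      apply finsum_eq_zero_of_forall_eq_zero
      intro i
      rw [Bcoef, if_pos hk0]
      by_cases h2 : (0:ℤ) ≤ n - i
      · rw [if_pos h2, coeff_X_geom_pow,
          if_neg (by omega : ¬ k.toNat ≤ (n - (i:ℤ)).toNat), mul_zero]
      · rw [if_neg h2, mul_zero]

lemma Btil_neg {n k : ℤ} (hk : k < 0) :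
    2 * Btil n k = if k ≤ n then
      (((-k-1).toNat.choose ((n-k).toNat)) : K) * (β/2)^((n-k).toNat) else 0 := by
  rw [two_Btil]
  by_cases hkn : k ≤ n
  · rw [if_pos hkn]
    set M := (n - k).toNat with hM
    have hsub : (Function.support fun i : ℕ => (-β/2 : K)^i * Bcoef (n - i) k)
        ⊆ ↑(Finset.range (M+1)) := by
      intro i hi
      simp only [Function.mem_support] at hi
      simp only [Finset.coe_range, Set.mem_Iio]
      by_contra h
      push_neg at h
      apply hi
      rw [Bcoef, if_neg (by omega), if_pos (by omega : n - (i:ℤ) ≤ 0),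
        Polynomial.coeff_X_add_C_pow, Nat.choose_eq_zero_of_lt (by omega)]
      simp
    rw [finsum_eq_sum_of_support_subset _ hsub]
    have hterm : ∀ i ∈ Finset.range (M + 1),
        (-β/2 : K)^i * Bcoef (n - i) k
          = (-(β/2 : K))^i * PowerSeries.coeff (R := K) (M - i)
              ((1 + PowerSeries.C (R := K) (β/2) * PowerSeries.X)^((-k).toNat)) := by
      intro i hi
      rw [Finset.mem_range] at hi
      rw [onePlus_pow, PowerSeries.coeff_mk, show (-β/2 : K) = -(β/2) by ring]
      congr 1
      by_cases h2 : n - (i:ℤ) ≤ 0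
      · rw [Bcoef, if_neg (by omega), if_pos h2, Polynomial.coeff_X_add_C_pow]
        rw [show (-k).toNat - (-(n - (i:ℤ))).toNat = M - i by omega]
        rw [show (-(n - (i:ℤ))).toNat = (-k).toNat - (M - i) by omega,
          Nat.choose_symm (by omega : M - i ≤ (-k).toNat)]
        exact mul_comm _ _
      · rw [Bcoef, if_neg (by omega), if_neg h2,
          Nat.choose_eq_zero_of_lt (by omega : (-k).toNat < M - i)]
        simp
    rw [Finset.sum_congr rfl hterm, geom_cauchy]
    have hK : (-k).toNat = ((-k-1).toNat) + 1 := by omega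
    rw [hK, pow_succ]
    rw [show geomPS (β/2) * ((1 + PowerSeries.C (R := K) (β/2) * PowerSeries.X)^((-k-1).toNat)
            * (1 + PowerSeries.C (R := K) (β/2) * PowerSeries.X))
          = (1 + PowerSeries.C (R := K) (β/2) * PowerSeries.X)^((-k-1).toNat)
            * (geomPS (β/2) * (1 + PowerSeries.C (R := K) (β/2) * PowerSeries.X)) by ring,
      geom_mul_onePlus, mul_one, onePlus_pow, PowerSeries.coeff_mk]
  · rw [if_neg hkn]
    apply finsum_eq_zero_of_forall_eq_zero
    intro i
    rw [Bcoef, if_neg (by omega), if_pos (by omega : n - (i:ℤ) ≤ 0),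
      Polynomial.coeff_X_add_C_pow, Nat.choose_eq_zero_of_lt (by omega)]
    simp

theorem duality_PhiBracket_star_phiBeta (m n : ℤ) :
    (Function.support fun k : ℤ => Acoef m k * Btil n k).Finite ∧
    2 * ∑ᶠ k : ℤ, Acoef m k * Btil n k = (if m = n then 1 else 0) := by
  have hA0 : ∀ k : ℤ, k < m → Acoef m k = 0 := by
    intro k hkm
    by_cases hk : 0 ≤ k
    · rw [Acoef_nonneg hk, if_neg (by omega)]
    · rw [Acoef_neg (by omega), if_neg (by omega)]
  have hB0 : ∀ k : ℤ, n < k → Btil n k = 0 := by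
    intro k hnk
    have h2 : (2:K) * Btil n k = 0 := by
      by_cases hk : 0 ≤ k
      · rw [Btil_nonneg hk, if_neg (by omega)]
      · rw [Btil_neg (by omega), if_neg (by omega)]
    exact (mul_eq_zero.mp h2).resolve_left two_ne_zero_K
  have hsupp : (Function.support fun k : ℤ => Acoef m k * Btil n k) ⊆ ↑(Finset.Icc m n) := by
    intro k hk
    simp only [Function.mem_support] at hk
    simp only [Finset.coe_Icc, Set.mem_Icc]
    constructor
    · by_contra h; push_neg at h; exact hk (by rw [hA0 k h, zero_mul])
    · by_contra h; push_neg at h; exact hk (by rw [hB0 k h, mul_zero])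
  refine ⟨Set.Finite.subset (Finset.Icc m n).finite_toSet hsupp, ?_⟩
  rw [finsum_eq_sum_of_support_subset _ hsupp, Finset.mul_sum]
  have hre : ∀ k ∈ Finset.Icc m n, 2 * (Acoef m k * Btil n k) = Acoef m k * (2 * Btil n k) :=
    fun k _ => by ring
  rw [Finset.sum_congr rfl hre]
  by_cases hmn : m ≤ n
  swap
  · rw [Finset.Icc_eq_empty (by omega), Finset.sum_empty, if_neg (by omega)]
  · set L := (n - m).toNat with hL
    have hIcc : Finset.Icc m n
        = (Finset.range (L+1)).map ⟨fun j : ℕ => m + (j:ℤ), show Function.Injective (fun j : ℕ => m + (j:ℤ)) from fun a b h => by simpa using h⟩ := by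
      ext z
      simp only [Finset.mem_Icc, Finset.mem_map, Finset.mem_range, Function.Embedding.coeFn_mk]
      constructor
      · intro hz; exact ⟨(z - m).toNat, by omega, by omega⟩
      · rintro ⟨j, hj, rfl⟩; omega
    rw [hIcc, Finset.sum_map]
    simp only [Function.Embedding.coeFn_mk]
    by_cases hm : 0 ≤ m
    · -- case 0 ≤ m ≤ n
      have hterm : ∀ j ∈ Finset.range (L+1),
          Acoef m (m + j) * (2 * Btil n (m + j))
            = ((-1:K))^(L-j) * ((((m.toNat + L).choose m.toNat) : K) * ((L.choose j) : K))
                * (β/2)^L := by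
        intro j hj
        rw [Finset.mem_range] at hj
        rw [Acoef_nonneg (by omega), if_pos ⟨hm, by omega⟩,
          Btil_nonneg (by omega), if_pos (by omega : m + (j:ℤ) ≤ n)]
        rw [show ((m + (j:ℤ)) - m).toNat = j by omega,
          show (n - (m + (j:ℤ))).toNat = L - j by omega,
          show (m + (j:ℤ)).toNat = m.toNat + j by omega,
          show n.toNat = m.toNat + L by omega]
        have hch : ((m.toNat + L).choose (m.toNat + j)) * ((m.toNat + j).choose m.toNat)
            = ((m.toNat + L).choose m.toNat) * (L.choose j) := by
          have h5 := Nat.choose_mul (n := m.toNat + L)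
            (show m.toNat ≤ m.toNat + j by omega)
          simpa using h5
        have hcast : (((m.toNat + L).choose (m.toNat + j)) : K)
              * (((m.toNat + j).choose m.toNat) : K)
            = (((m.toNat + L).choose m.toNat) : K) * ((L.choose j) : K) := by
          have h6 := congrArg (Nat.cast : ℕ → K) hch
          push_cast at h6
          exact h6
        have hpow : (β/2:K)^j * (β/2)^(L-j) = (β/2)^L := by
          rw [← pow_add]; congr 1; omega
        calc (((m.toNat + j).choose m.toNat : K) * (β/2)^j)
              * ((-1:K)^(L-j) * ((m.toNat + L).choose (m.toNat + j) : K) * (β/2)^(L-j))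
            = (-1:K)^(L-j) * ((((m.toNat + L).choose (m.toNat + j)):K)
                * (((m.toNat + j).choose m.toNat):K)) * ((β/2:K)^j * (β/2)^(L-j)) := by ring
          _ = _ := by rw [hcast, hpow]
      rw [Finset.sum_congr rfl hterm]
      rw [show ∑ j ∈ Finset.range (L+1), ((-1:K))^(L-j)
              * ((((m.toNat + L).choose m.toNat) : K) * ((L.choose j) : K)) * (β/2)^L
            = (((m.toNat + L).choose m.toNat : K) * (β/2)^L)
              * ∑ j ∈ Finset.range (L+1), ((-1:K))^(L-j) * ((L.choose j) : K) by
          rw [Finset.mul_sum]; exact Finset.sum_congr rfl fun j _ => by ring,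
        alt_sum_K']
      by_cases hEq : m = n
      · rw [if_pos hEq]
        have hL0 : L = 0 := by omega
        rw [hL0]
        norm_num
      · rw [if_neg hEq, if_neg (by omega), mul_zero]
    · by_cases hn : 0 ≤ n
      · -- m < 0 ≤ n : everything vanishes
        rw [if_neg (by omega : ¬ m = n)]
        apply Finset.sum_eq_zero
        intro j hj
        rw [Finset.mem_range] at hj
        by_cases hk : 0 ≤ m + (j:ℤ)
        · rw [Acoef_nonneg hk, if_neg (by omega), zero_mul]
        · rw [Btil_neg (by omega), if_pos (by omega : m + (j:ℤ) ≤ n),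
            Nat.choose_eq_zero_of_lt (by omega)]
          simp
      · -- m ≤ n < 0
        set N := (-m - 1).toNat with hN
        have hterm : ∀ j ∈ Finset.range (L+1),
            Acoef m (m + j) * (2 * Btil n (m + j))
              = ((-1:K))^j * (((N.choose L) : K) * ((L.choose j) : K)) * (β/2)^L := by
          intro j hj
          rw [Finset.mem_range] at hj
          rw [Acoef_neg (by omega : m + (j:ℤ) < 0), if_pos (by omega : m ≤ m + (j:ℤ)),
            Btil_neg (by omega : m + (j:ℤ) < 0), if_pos (by omega : m + (j:ℤ) ≤ n)]
          rw [show ((m + (j:ℤ)) - m).toNat = j by omega,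
            show (-(m + (j:ℤ)) - 1).toNat = N - j by omega,
            show (n - (m + (j:ℤ))).toNat = L - j by omega]
          have hch : (N.choose j) * ((N - j).choose (L - j)) = (N.choose L) * (L.choose j) :=
            (Nat.choose_mul (n := N) (show j ≤ L by omega)).symm
          have hcast : ((N.choose j) : K) * (((N - j).choose (L - j)) : K)
              = ((N.choose L) : K) * ((L.choose j) : K) := by
            have h6 := congrArg (Nat.cast : ℕ → K) hch
            push_cast at h6
            exact h6
          have hpow : (β/2:K)^j * (β/2)^(L-j) = (β/2)^L := by
            rw [← pow_add]; congr 1; omega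
          calc ((-1:K)^j * (N.choose j : K) * (β/2)^j)
                * (((N - j).choose (L - j) : K) * (β/2)^(L-j))
              = (-1:K)^j * (((N.choose j):K) * (((N - j).choose (L - j)):K))
                  * ((β/2:K)^j * (β/2)^(L-j)) := by ring
            _ = _ := by rw [hcast, hpow]
        rw [Finset.sum_congr rfl hterm]
        rw [show ∑ j ∈ Finset.range (L+1), ((-1:K))^j
                * (((N.choose L) : K) * ((L.choose j) : K)) * (β/2)^L
              = (((N.choose L) : K) * (β/2)^L)
                * ∑ j ∈ Finset.range (L+1), ((-1:K))^j * ((L.choose j) : K) by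
            rw [Finset.mul_sum]; exact Finset.sum_congr rfl fun j _ => by ring,
          alt_sum_K]
        by_cases hEq : m = n
        · rw [if_pos hEq]
          have hL0 : L = 0 := by omega
          rw [hL0]
          norm_num
        · rw [if_neg hEq, if_neg (by omega), mul_zero]

end
end

section
/- For all integers m and n, define V(m,n) := A(m,0)·A(n,0) + Σ_{k≥1} 2(−1)^k·A(m,−k)·A(n,k), a finite sum in ℚ[β]. Then V(m,n) equals the coefficient of z^m w^n in the expansion of (w^{−1}−z^{−1})/(w^{−1}+z^{−1}+βw^{−1}z^{−1}) = (z−w)/(z+w+β) as an iterated formal Laurent series in K((w^{−1}))((z^{−1})), that is, in the expansion (1−wz^{−1})/(1+(w+β)z^{−1}) = 1 − (2w+β)z^{−1} + (2w^2+3βw+β^2)z^{−2} − ⋯. (This is the two-point vacuum expectation value ⟨φ^{(β)}(z)φ^{(β)}(w)⟩ of the β-deformed neutral fermion field.) -/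
/-!
Statement 4: the two-point function `⟨φ^{(β)}(z)φ^{(β)}(w)⟩`.
`V(m,n) := A(m,0)A(n,0) + Σ_{k≥1} 2(−1)^k A(m,−k)A(n,k)` equals the coefficient
of `z^m w^n` in the expansion of `(w⁻¹−z⁻¹)/(w⁻¹⊕z⁻¹) = (1−wz⁻¹)/(1+(w+β)z⁻¹)`
as an iterated formal Laurent series in `K((w⁻¹))((z⁻¹))`: the coefficients of the
powers of `z⁻¹` are polynomials in `w`, so the expansion is realized as a formal
power series in `Z := z⁻¹` with coefficients in `K[w]`, inverting `1+(w+β)Z`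
(whose constant term `1` is a unit, so the inverse is the geometric expansion).
-/

noncomputable section

open scoped BigOperators

/-- `V(m,n) := A(m,0)·A(n,0) + Σ_{k≥1} 2(−1)^k·A(m,−k)·A(n,k)` (a finite sum). -/
def Vval (m n : ℤ) : K :=
  Acoef m 0 * Acoef n 0 +
    ∑ᶠ k : ℕ, 2 * (-1 : K) ^ (k + 1) * Acoef m (-(k + 1 : ℕ)) * Acoef n ((k : ℤ) + 1)

/-- The expansion of `(1−wz⁻¹)/(1+(w+β)z⁻¹)` as an element of `K[w][[z⁻¹]]`. -/
def twoPtSeries : PowerSeries (Polynomial K) :=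
  (1 - PowerSeries.C (R := Polynomial K) Polynomial.X * PowerSeries.X) *
    PowerSeries.invOfUnit
      (1 + PowerSeries.C (R := Polynomial K) (Polynomial.X + Polynomial.C β) * PowerSeries.X) 1

/-! Auxiliary -/

lemma geom_mul (c : K) : (1 + PowerSeries.C (R := K) c * PowerSeries.X) * geomPS c = 1 := by
  ext n
  cases n with
  | zero => simp [geomPS]
  | succ n =>
    simp only [add_mul, one_mul, map_add, mul_assoc, PowerSeries.coeff_C_mul,
      PowerSeries.coeff_succ_X_mul, geomPS, PowerSeries.coeff_mk, PowerSeries.coeff_one]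
    ring_nf
    simp

def pB : Polynomial K := Polynomial.X + Polynomial.C (β / 2)
def gS : PowerSeries (Polynomial K) := PowerSeries.map Polynomial.C (geomPS (β / 2))
def yS : PowerSeries (Polynomial K) := PowerSeries.C pB * (PowerSeries.X * gS)
def vS : PowerSeries (Polynomial K) :=
  1 + PowerSeries.C (Polynomial.C (β / 2)) * PowerSeries.X
def uS : PowerSeries (Polynomial K) :=
  1 + PowerSeries.C (R := Polynomial K) (Polynomial.X + Polynomial.C β) * PowerSeries.X
def nmS : PowerSeries (Polynomial K) :=
  1 - PowerSeries.C (R := Polynomial K) Polynomial.X * PowerSeries.X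

lemma hvg : vS * gS = 1 := by
  have h := congrArg (PowerSeries.map (Polynomial.C : K →+* Polynomial K)) (geom_mul (β / 2))
  simpa [vS, gS, map_mul, map_add, map_one] using h

lemma hXg : PowerSeries.X * gS = PowerSeries.map Polynomial.C (PowerSeries.X * geomPS (β / 2)) := by
  simp [gS, map_mul]

lemma hu_inv : uS * PowerSeries.invOfUnit uS 1 = 1 := by
  apply PowerSeries.mul_invOfUnit
  simp [uS]

lemma hv1y : vS * (1 + yS) = uS := by
  have : vS * (1 + yS) = vS + PowerSeries.C pB * PowerSeries.X * (vS * gS) := by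
    unfold yS; ring
  rw [this, hvg, mul_one]
  have hpoly : (Polynomial.X + Polynomial.C (β / 2) : Polynomial K) + Polynomial.C (β / 2) =
      Polynomial.X + Polynomial.C β := by
    rw [add_assoc]
    norm_num
    haveI : CharZero K :=
      charZero_of_injective_algebraMap (algebraMap ℚ (RatFunc ℚ)).injective
    rw [← map_add, ← add_div, add_self_div_two]
  have h := congrArg (PowerSeries.C (R := Polynomial K)) hpoly
  rw [map_add, map_add] at h
  have hq : PowerSeries.C (R := Polynomial K) (Polynomial.X + Polynomial.C (β / 2)) =
      PowerSeries.C Polynomial.X + PowerSeries.C (Polynomial.C (β / 2)) := map_add _ _ _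
  unfold vS uS pB
  linear_combination PowerSeries.X * hq + PowerSeries.X * h

lemma hv1my : vS * (1 - yS) = nmS := by
  have : vS * (1 - yS) = vS - PowerSeries.C pB * PowerSeries.X * (vS * gS) := by
    unfold yS; ring
  rw [this, hvg, mul_one]
  have h : PowerSeries.C (R := Polynomial K) (Polynomial.X + Polynomial.C (β / 2)) =
      PowerSeries.C Polynomial.X + PowerSeries.C (Polynomial.C (β / 2)) := map_add _ _ _
  unfold vS nmS pB
  linear_combination (-(PowerSeries.X : PowerSeries (Polynomial K))) * h

lemma key1 : (1 + yS) * twoPtSeries = 1 - yS := by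
  have hT : twoPtSeries = nmS * PowerSeries.invOfUnit uS 1 := rfl
  have hc : vS * ((1 + yS) * twoPtSeries) = vS * (1 - yS) := by
    rw [hT, hv1my]
    calc vS * ((1 + yS) * (nmS * PowerSeries.invOfUnit uS 1))
        = (vS * (1 + yS)) * PowerSeries.invOfUnit uS 1 * nmS := by ring
      _ = uS * PowerSeries.invOfUnit uS 1 * nmS := by rw [hv1y]
      _ = nmS := by rw [hu_inv, one_mul]
  have := congrArg (gS * ·) hc
  simpa [← mul_assoc, mul_comm gS vS, hvg] using this

lemma y_const : PowerSeries.constantCoeff yS = 0 := by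
  simp [yS]

lemma hy_inv : (1 + yS) * PowerSeries.invOfUnit (1 + yS) 1 = 1 := by
  apply PowerSeries.mul_invOfUnit
  simp [y_const]

lemma key2 (M : ℕ) :
    PowerSeries.coeff M twoPtSeries =
      PowerSeries.coeff M (2 * (∑ k ∈ Finset.range (M + 1), (-yS) ^ k) - 1) := by
  set D : PowerSeries (Polynomial K) :=
    2 * (∑ k ∈ Finset.range (M + 1), (-yS) ^ k) - 1 with hD
  have hg : (1 + yS) * (∑ k ∈ Finset.range (M + 1), (-yS) ^ k) = 1 - (-yS) ^ (M + 1) := by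
    linear_combination -mul_geom_sum (-yS) (M + 1)
  have h2 : (1 + yS) * (twoPtSeries - D) = 2 * (-yS) ^ (M + 1) := by
    rw [hD]
    linear_combination key1 - 2 * hg
  have h3 : twoPtSeries - D =
      PowerSeries.invOfUnit (1 + yS) 1 * (2 * (-yS) ^ (M + 1)) := by
    linear_combination (PowerSeries.invOfUnit (1 + yS) 1) * h2 + (D - twoPtSeries) * hy_inv
  have hXy : (PowerSeries.X : PowerSeries (Polynomial K)) ∣ (-yS) := by
    refine Dvd.dvd.neg_right ?_
    exact ⟨PowerSeries.C pB * gS, by unfold yS; ring⟩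
  have hdvd : (PowerSeries.X : PowerSeries (Polynomial K)) ^ (M + 1) ∣ (twoPtSeries - D) := by
    rw [h3]
    exact Dvd.dvd.mul_left (Dvd.dvd.mul_left (pow_dvd_pow_of_dvd hXy (M + 1)) 2) _
  have h0 : PowerSeries.coeff M (twoPtSeries - D) = 0 :=
    PowerSeries.X_pow_dvd_iff.mp hdvd M (Nat.lt_succ_self M)
  rw [map_sub, sub_eq_zero] at h0
  exact h0

lemma coeff_y_pow (M N k : ℕ) :
    (PowerSeries.coeff M (yS ^ k)).coeff N =
      (PowerSeries.coeff (R := K) M ((PowerSeries.X * geomPS (β / 2)) ^ k)) * ((pB ^ k).coeff N) := by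
  have : yS ^ k = PowerSeries.C (pB ^ k) *
      PowerSeries.map Polynomial.C ((PowerSeries.X * geomPS (β / 2)) ^ k) := by
    rw [map_pow, map_pow]
    rw [yS, hXg, mul_pow]
  rw [this, PowerSeries.coeff_C_mul, PowerSeries.coeff_map, mul_comm, Polynomial.coeff_C_mul]

lemma coeff_negy (M N k : ℕ) :
    (PowerSeries.coeff M ((-yS) ^ k)).coeff N =
      (-1 : K) ^ k *
        (PowerSeries.coeff (R := K) M ((PowerSeries.X * geomPS (β / 2)) ^ k) * ((pB ^ k).coeff N)) := by
  rw [neg_pow]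
  have h1 : ((-1 : PowerSeries (Polynomial K))) ^ k * yS ^ k =
      PowerSeries.C ((-1 : Polynomial K) ^ k) * yS ^ k := by
    rw [map_pow, map_neg, map_one]
  have h2 : ((-1 : Polynomial K)) ^ k = Polynomial.C ((-1 : K) ^ k) := by
    rw [map_pow, map_neg, map_one]
  rw [h1, PowerSeries.coeff_C_mul, h2, Polynomial.coeff_C_mul, coeff_y_pow]

lemma rhs_eval (M N : ℕ) :
    (PowerSeries.coeff M twoPtSeries).coeff N =
      (if M = 0 ∧ N = 0 then (1 : K) else 0) +
        ∑ k ∈ Finset.range M, 2 * (-1 : K) ^ (k + 1) *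
          (PowerSeries.coeff (R := K) M ((PowerSeries.X * geomPS (β / 2)) ^ (k + 1))) *
          ((pB ^ (k + 1)).coeff N) := by
  rw [key2 M, two_mul, map_sub, map_add, map_sum, PowerSeries.coeff_one,
    Polynomial.coeff_sub, Polynomial.coeff_add, Polynomial.finset_sum_coeff]
  have hsum : ∀ i ∈ Finset.range (M + 1),
      (PowerSeries.coeff M ((-yS) ^ i)).coeff N =
        (-1 : K) ^ i *
          (PowerSeries.coeff (R := K) M ((PowerSeries.X * geomPS (β / 2)) ^ i) * ((pB ^ i).coeff N)) :=
    fun i _ => coeff_negy M N i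
  rw [Finset.sum_congr rfl hsum, Finset.sum_range_succ']
  have hg0 : (-1 : K) ^ 0 *
      (PowerSeries.coeff (R := K) M ((PowerSeries.X * geomPS (β / 2)) ^ 0) * ((pB ^ 0).coeff N)) =
      if M = 0 ∧ N = 0 then (1 : K) else 0 := by
    simp only [pow_zero, one_mul, map_one, PowerSeries.coeff_one, Polynomial.coeff_one]
    split_ifs with h1 h2 h3 h4 h5 <;> simp_all
  have hone : ((if M = 0 then (1 : Polynomial K) else 0)).coeff N =
      if M = 0 ∧ N = 0 then (1 : K) else 0 := by
    split_ifs with h1 h2 h3 <;> simp_all [Polynomial.coeff_one]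
  rw [hg0, hone]
  have hss : (∑ x ∈ Finset.range M, (-1 : K) ^ (x + 1) *
        ((PowerSeries.coeff (R := K) M) ((PowerSeries.X * geomPS (β / 2)) ^ (x + 1)) *
          (pB ^ (x + 1)).coeff N)) +
      (∑ x ∈ Finset.range M, (-1 : K) ^ (x + 1) *
        ((PowerSeries.coeff (R := K) M) ((PowerSeries.X * geomPS (β / 2)) ^ (x + 1)) *
          (pB ^ (x + 1)).coeff N)) =
      ∑ x ∈ Finset.range M, 2 * (-1 : K) ^ (x + 1) *
        (PowerSeries.coeff (R := K) M) ((PowerSeries.X * geomPS (β / 2)) ^ (x + 1)) *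
        (pB ^ (x + 1)).coeff N := by
    rw [← Finset.sum_add_distrib]
    exact Finset.sum_congr rfl fun k _ => by ring
  linear_combination hss

lemma Acoef_neg_s4 (m : ℤ) (hm : m ≤ 0) (k : ℕ) :
    Acoef m (-(k + 1 : ℕ)) =
      PowerSeries.coeff (R := K) (-m).toNat ((PowerSeries.X * geomPS (β / 2)) ^ (k + 1)) := by
  rw [Acoef, if_neg (by omega), if_pos hm]
  norm_num

lemma Acoef_neg_zero (m : ℤ) (k : ℕ) (h : (-m).toNat < k + 1) : Acoef m (-(k + 1 : ℕ)) = 0 := by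
  rw [Acoef, if_neg (by omega)]
  split_ifs with hm
  · have : ((-(-(k + 1 : ℕ) : ℤ))).toNat = k + 1 := by omega
    rw [this]
    refine PowerSeries.X_pow_dvd_iff.mp ?_ _ h
    exact pow_dvd_pow_of_dvd (dvd_mul_right _ _) _
  · rfl

lemma Acoef_nonneg_s4 (n : ℤ) (hn : 0 ≤ n) (k : ℕ) :
    Acoef n ((k : ℤ) + 1) = (pB ^ (k + 1)).coeff n.toNat := by
  rw [Acoef, if_pos (by omega), if_pos hn, pB]
  norm_num

lemma Acoef_zero (m : ℤ) : Acoef m 0 = if m = 0 then 1 else 0 := by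
  rw [Acoef, if_pos le_rfl]
  simp only [Int.toNat_zero, pow_zero, Polynomial.coeff_one]
  split_ifs <;> first | rfl | omega

theorem twoPoint_phiBeta (m n : ℤ) :
    Vval m n =
      if m ≤ 0 ∧ 0 ≤ n then
        (PowerSeries.coeff (R := Polynomial K) (-m).toNat twoPtSeries).coeff n.toNat
      else 0 := by
  by_cases h : m ≤ 0 ∧ 0 ≤ n
  · obtain ⟨hm, hn⟩ := h
    rw [if_pos ⟨hm, hn⟩, rhs_eval, Vval]
    have hsupp : (Function.support fun k : ℕ =>
        2 * (-1 : K) ^ (k + 1) * Acoef m (-(k + 1 : ℕ)) * Acoef n ((k : ℤ) + 1)) ⊆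
        ↑(Finset.range (-m).toNat) := by
      intro k hk
      simp only [Function.mem_support] at hk
      by_contra hkM
      simp only [Finset.coe_range, Set.mem_Iio, not_lt] at hkM
      exact hk (by rw [Acoef_neg_zero m k (by omega), mul_zero, zero_mul])
    rw [finsum_eq_sum_of_support_subset _ hsupp]
    congr 1
    · rw [Acoef_zero, Acoef_zero]
      split_ifs <;> simp_all <;> omega
    · apply Finset.sum_congr rfl
      intro k _
      rw [Acoef_neg_s4 m hm k, Acoef_nonneg_s4 n hn k]
  · rw [if_neg h, Vval]
    rcases not_and_or.mp h with hm | hn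
    · push_neg at hm
      have h0 : Acoef m 0 = 0 := by rw [Acoef_zero, if_neg (by omega)]
      have hk : ∀ k : ℕ,
          2 * (-1 : K) ^ (k + 1) * Acoef m (-(k + 1 : ℕ)) * Acoef n ((k : ℤ) + 1) = 0 := by
        intro k
        rw [Acoef, if_neg (by omega), if_neg (by omega), mul_zero, zero_mul]
      rw [h0, zero_mul, zero_add, finsum_congr hk, finsum_zero]
    · push_neg at hn
      have h0 : Acoef n 0 = 0 := by rw [Acoef_zero, if_neg (by omega)]
      have hk : ∀ k : ℕ,
          2 * (-1 : K) ^ (k + 1) * Acoef m (-(k + 1 : ℕ)) * Acoef n ((k : ℤ) + 1) = 0 := by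
        intro k
        have hA : Acoef n ((k : ℤ) + 1) = 0 := by
          rw [Acoef, if_pos (by omega), if_neg (by omega)]
        rw [hA, mul_zero]
      rw [h0, mul_zero, zero_add, finsum_congr hk, finsum_zero]


end
end
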